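/- Let S₀, S₁, …, S_m be finite sets forming a connected collection, let l₀, …, l_m ≥ 0 be real numbers, and let μ ≥ 0. Then, with P = ⋃_{j=0}^{m} S_j: |P| + μ · max{l₀, …, l_m} ≤ −m + Σ_{j=0}^{m} (|S_j| + μ l_j). -/
import Mathlib


/-- A finite indexed family of finite sets is connected if the intersection graph on the
index set (an edge between `i` and `j` whenever `S i ∩ S j ≠ ∅`) is connected, i.e. any
two indices are joined by a path along which consecutive sets intersect. -/
def ConnectedFamily {α : Type*} [DecidableEq α] {m : ℕ} (S : Fin (m + 1) → Finset α) : Prop :=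
  ∀ i j : Fin (m + 1), ∃ (n : ℕ) (c : Fin (n + 1) → Fin (m + 1)),
    c 0 = i ∧ c (Fin.last n) = j ∧
    ∀ k : Fin n, (S (c k.castSucc) ∩ S (c k.succ)).Nonempty

lemma key_card {α : Type*} [DecidableEq α] (m : ℕ) (S : Fin (m + 1) → Finset α)
    (h : ConnectedFamily S) :
    (Finset.univ.biUnion S).card + m ≤ ∑ j : Fin (m + 1), (S j).card := by
  classical
  rcases Nat.eq_zero_or_pos m with hm | hm
  · subst hm
    have := Finset.card_biUnion_le (s := (Finset.univ : Finset (Fin 1))) (t := S)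
    simpa using this
  set P : Fin (m+1) → ℕ → Prop := fun i n =>
    ∃ c : Fin (n+1) → Fin (m+1), c 0 = 0 ∧ c (Fin.last n) = i ∧
      ∀ k : Fin n, (S (c k.castSucc) ∩ S (c k.succ)).Nonempty with hP
  have hex : ∀ i, ∃ n, P i n := fun i => h 0 i
  set d : Fin (m+1) → ℕ := fun i => Nat.find (hex i) with hd
  have hdspec : ∀ i, P i (d i) := fun i => Nat.find_spec (hex i)
  have hd0 : ∀ i : Fin (m+1), i ≠ 0 → 0 < d i := by
    intro i hi
    rcases Nat.eq_zero_or_pos (d i) with h1 | h1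
    swap
    · exact h1
    · exfalso
      have hs := hdspec i
      rw [h1] at hs
      obtain ⟨c, hc0, hcl, -⟩ := hs
      exact hi (by rw [← hcl, ← hc0]; rfl)
  have A : ∀ i : Fin (m+1), i ≠ 0 → ∃ j x, d j < d i ∧ x ∈ S j ∧ x ∈ S i := by
    intro i hi
    obtain ⟨n', hn'⟩ : ∃ n', d i = n' + 1 := ⟨d i - 1, by have := hd0 i hi; omega⟩
    have hspec := hdspec i
    rw [hn'] at hspec
    obtain ⟨c, hc0, hcl, hck⟩ := hspec
    obtain ⟨x, hx⟩ := hck (Fin.last n')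
    rw [Finset.mem_inter] at hx
    refine ⟨c (Fin.last n').castSucc, x, ?_, hx.1, ?_⟩
    · have hle : d (c (Fin.last n').castSucc) ≤ n' := by
        apply Nat.find_min'
        refine ⟨fun k => c k.castSucc, by simpa using hc0, rfl, fun k => ?_⟩
        have := hck k.castSucc
        rwa [Fin.succ_castSucc] at this
      omega
    · have hlast : (Fin.last n').succ = Fin.last (n'+1) := rfl
      rw [hlast, hcl] at hx
      exact hx.2
  obtain ⟨j0, x0, -, -, -⟩ := A ⟨1, by omega⟩ (by
    intro hh
    have := congrArg Fin.val hh
    simp [Fin.val_zero] at this)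
  have A' : ∀ i : Fin (m+1), ∃ jx : Fin (m+1) × α,
      i ≠ 0 → d jx.1 < d i ∧ jx.2 ∈ S jx.1 ∧ jx.2 ∈ S i := by
    intro i
    by_cases hi : i = 0
    · exact ⟨(j0, x0), fun hcon => absurd hi hcon⟩
    · obtain ⟨j, x, h1, h2, h3⟩ := A i hi
      exact ⟨(j, x), fun _ => ⟨h1, h2, h3⟩⟩
  choose f hf using A'
  set U := Finset.univ.biUnion S with hU
  have hxU : ∀ i ∈ (Finset.univ.erase (0 : Fin (m+1))), (f i).2 ∈ U := by
    intro i hi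
    have hi0 : i ≠ 0 := Finset.ne_of_mem_erase hi
    exact Finset.mem_biUnion.2 ⟨i, Finset.mem_univ i, (hf i hi0).2.2⟩
  have hm' : m = ∑ x ∈ U,
      ((Finset.univ.erase (0:Fin (m+1))).filter (fun i => (f i).2 = x)).card := by
    have hc := Finset.card_eq_sum_card_fiberwise hxU
    rw [← hc]
    simp
  have hSU : ∀ j, U.filter (fun x => x ∈ S j) = S j := by
    intro j; ext x; simp only [Finset.mem_filter]
    exact ⟨fun hh => hh.2, fun hh => ⟨Finset.mem_biUnion.2 ⟨j, Finset.mem_univ _, hh⟩, hh⟩⟩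
  have hsum : ∑ j : Fin (m+1), (S j).card
      = ∑ x ∈ U, (Finset.univ.filter fun j => x ∈ S j).card := by
    calc ∑ j : Fin (m+1), (S j).card
        = ∑ j : Fin (m+1), (U.filter (fun x => x ∈ S j)).card := by simp [hSU]
      _ = ∑ j : Fin (m+1), ∑ x ∈ U, if x ∈ S j then 1 else 0 := by
          simp only [Finset.card_filter]
      _ = ∑ x ∈ U, ∑ j : Fin (m+1), if x ∈ S j then 1 else 0 := Finset.sum_comm
      _ = ∑ x ∈ U, (Finset.univ.filter fun j => x ∈ S j).card := by
          simp only [Finset.card_filter]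
  have point : ∀ x ∈ U,
      ((Finset.univ.erase (0:Fin (m+1))).filter (fun i => (f i).2 = x)).card + 1
        ≤ (Finset.univ.filter fun j => x ∈ S j).card := by
    intro x hx
    set C := (Finset.univ.erase (0:Fin (m+1))).filter (fun i => (f i).2 = x) with hC
    have hCprop : ∀ i ∈ C, i ≠ 0 ∧ (f i).2 = x := by
      intro i hi
      rw [hC, Finset.mem_filter] at hi
      exact ⟨Finset.ne_of_mem_erase hi.1, hi.2⟩
    set T := C ∪ C.image (fun i => (f i).1) with hT
    have hTsub : T ⊆ Finset.univ.filter fun j => x ∈ S j := by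
      intro j hj
      rw [hT, Finset.mem_union] at hj
      rw [Finset.mem_filter]
      refine ⟨Finset.mem_univ _, ?_⟩
      rcases hj with hj | hj
      · obtain ⟨hi0, hxi⟩ := hCprop j hj
        have := (hf j hi0).2.2
        rwa [hxi] at this
      · rw [Finset.mem_image] at hj
        obtain ⟨i, hi, rfl⟩ := hj
        obtain ⟨hi0, hxi⟩ := hCprop i hi
        have := (hf i hi0).2.1
        rwa [hxi] at this
    rcases C.eq_empty_or_nonempty with hCe | hCne
    · rw [hCe]
      simp only [Finset.card_empty, zero_add]
      rw [Finset.mem_biUnion] at hx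
      obtain ⟨j, -, hj⟩ := hx
      exact Finset.card_pos.2 ⟨j, Finset.mem_filter.2 ⟨Finset.mem_univ _, hj⟩⟩
    · have hTne : T.Nonempty := hCne.mono Finset.subset_union_left
      obtain ⟨v, hvT, hvmin⟩ := Finset.exists_min_image T d hTne
      have hvC : v ∉ C := by
        intro hvC
        obtain ⟨hv0, -⟩ := hCprop v hvC
        have hpv : (f v).1 ∈ T :=
          Finset.mem_union_right _ (Finset.mem_image_of_mem (fun i => (f i).1) hvC)
        have h1 := hvmin ((f v).1) hpv
        have h2 := (hf v hv0).1
        omega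
      have hsub2 : insert v C ⊆ T :=
        Finset.insert_subset hvT Finset.subset_union_left
      have hcard := Finset.card_le_card (hsub2.trans hTsub)
      rw [Finset.card_insert_of_notMem hvC] at hcard
      omega
  calc U.card + m
      = ∑ x ∈ U, (((Finset.univ.erase (0:Fin (m+1))).filter (fun i => (f i).2 = x)).card + 1) := by
        rw [Finset.sum_add_distrib]
        simp only [Finset.sum_const, smul_eq_mul, mul_one]
        rw [← hm']
        omega
    _ ≤ ∑ x ∈ U, (Finset.univ.filter fun j => x ∈ S j).card := Finset.sum_le_sum point
    _ = ∑ j : Fin (m+1), (S j).card := hsum.symm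

/-- If `S₀, …, S_m` is a connected collection of finite sets, `l₀, …, l_m ≥ 0` and `μ ≥ 0`,
then `|⋃_j S_j| + μ·max_j l_j ≤ −m + Σ_j (|S_j| + μ l_j)`. -/
theorem card_union_add_mu_le_of_connectedFamily {α : Type*} [DecidableEq α] (m : ℕ)
    (S : Fin (m + 1) → Finset α) (h : ConnectedFamily S)
    (l : Fin (m + 1) → ℝ) (hl : ∀ j, 0 ≤ l j) (μ : ℝ) (hμ : 0 ≤ μ) :
    ((Finset.univ.biUnion S).card : ℝ) + μ * (⨆ j, l j)
      ≤ -(m : ℝ) + ∑ j : Fin (m + 1), (((S j).card : ℝ) + μ * l j) := by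
  have key := key_card m S h
  have h1 : ((Finset.univ.biUnion S).card : ℝ) + (m : ℝ)
      ≤ ∑ j : Fin (m + 1), ((S j).card : ℝ) := by
    exact_mod_cast key
  have hsup : (⨆ j, l j) ≤ ∑ j : Fin (m + 1), l j :=
    ciSup_le fun j => Finset.single_le_sum (fun i _ => hl i) (Finset.mem_univ j)
  have h2 : μ * (⨆ j, l j) ≤ μ * ∑ j : Fin (m + 1), l j :=
    mul_le_mul_of_nonneg_left hsup hμ
  have h3 : ∑ j : Fin (m + 1), (((S j).card : ℝ) + μ * l j)
      = ∑ j : Fin (m + 1), ((S j).card : ℝ) + μ * ∑ j : Fin (m + 1), l j := by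
    rw [Finset.sum_add_distrib, Finset.mul_sum]
  rw [h3]
  linarith
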